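/- Let $h$ be an integer and let $g : [-\pi, \pi] \to \mathbb{R}$ be continuous. Then the function $F(d) = \int_{-\pi}^{\pi} e^{ih\nu}\, g(\nu)\, |1 - e^{-i\nu}|^{-2d}\, d\nu$ is well defined and continuous on the interval $(-\infty, 1/2)$. -/

import Mathlib

/-!
On `[-π, π]` we have `|1 - e^{-iν}| = 2|sin(ν/2)| ≥ (2/π)|ν|`, so the weight
`|1 - e^{-iν}|^t` is integrable for every `t > -1`, which for `t = -2d` is exactly `d < 1/2`.
For `t` in a compact interval `[s, u]` the bound `x^t ≤ x^s + x^u` gives one integrable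
dominating function, and dominated convergence yields continuity in the exponent.
-/

open Set Filter Topology MeasureTheory intervalIntegral
open scoped Interval

theorem norm_one_sub_exp_neg_mul_I (ν : ℝ) :
    ‖1 - Complex.exp (-(ν * Complex.I))‖ = 2 * |Real.sin (ν / 2)| := by
  have h := Complex.norm_exp_I_mul_ofReal_sub_one (-ν)
  rw [norm_sub_rev, show Complex.I * ((-ν : ℝ) : ℂ) = -(ν * Complex.I) by push_cast; ring] at h
  rw [h, neg_div, Real.sin_neg, norm_mul, norm_neg, Real.norm_eq_abs, Real.norm_eq_abs, abs_two]

theorem norm_one_sub_exp_neg_mul_I_le_two (ν : ℝ) :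
    ‖1 - Complex.exp (-(ν * Complex.I))‖ ≤ 2 := by
  rw [norm_one_sub_exp_neg_mul_I]
  linarith [Real.abs_sin_le_one (ν / 2)]

theorem mul_abs_le_norm_one_sub_exp_neg_mul_I {ν : ℝ} (hν : |ν| ≤ Real.pi) :
    2 / Real.pi * |ν| ≤ ‖1 - Complex.exp (-(ν * Complex.I))‖ := by
  have h := Real.mul_abs_le_abs_sin (x := ν / 2) (by rw [abs_div, abs_two]; linarith)
  rw [abs_div, abs_two] at h
  rw [norm_one_sub_exp_neg_mul_I]
  linarith

theorem intervalIntegrable_abs_rpow {r : ℝ} (hr : -1 < r) (a b : ℝ) :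
    IntervalIntegrable (fun x : ℝ => |x| ^ r) volume a b := by
  have h_nonneg : ∀ c, 0 ≤ c → IntervalIntegrable (fun x : ℝ => |x| ^ r) volume 0 c := by
    intro c hc
    refine (intervalIntegrable_congr fun x hx => ?_).1 (intervalIntegrable_rpow' hr)
    rw [uIoc_of_le hc] at hx
    simp [abs_of_pos hx.1]
  have h_all : ∀ c, IntervalIntegrable (fun x : ℝ => |x| ^ r) volume 0 c := by
    intro c
    rcases le_total 0 c with hc | hc
    · exact h_nonneg c hc
    · simpa using (IntervalIntegrable.iff_comp_neg (f := fun x : ℝ => |x| ^ r)).1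
        (h_nonneg (-c) (neg_nonneg.2 hc))
  exact (h_all a).symm.trans (h_all b)

theorem Real.rpow_le_rpow_add_rpow_of_le_of_le {x y K e : ℝ} (hy : 0 < y) (hyx : y ≤ x)
    (hxK : x ≤ K) : x ^ e ≤ y ^ e + K ^ e := by
  rcases le_total 0 e with he | he
  · linarith [Real.rpow_le_rpow (hy.trans_le hyx).le hxK he, Real.rpow_nonneg hy.le e]
  · linarith [Real.rpow_le_rpow_of_nonpos hy hyx he,
      Real.rpow_nonneg ((hy.trans_le hyx).trans_le hxK).le e]

theorem Real.rpow_le_rpow_add_rpow_of_mem_Icc {x s t u : ℝ} (hx : 0 < x) (ht : t ∈ Icc s u) :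
    x ^ t ≤ x ^ s + x ^ u := by
  rcases le_total x 1 with h1 | h1
  · linarith [Real.rpow_le_rpow_of_exponent_ge hx h1 ht.1, Real.rpow_nonneg hx.le u]
  · linarith [Real.rpow_le_rpow_of_exponent_le h1 ht.2, Real.rpow_nonneg hx.le s]

theorem intervalIntegrable_rpow_of_mul_abs_le {f : ℝ → ℝ} {a b c K e : ℝ} (hf : Measurable f)
    (hc : 0 < c) (h_lower : ∀ x ∈ Ι a b, c * |x| ≤ f x) (h_upper : ∀ x ∈ Ι a b, f x ≤ K)
    (he : -1 < e) : IntervalIntegrable (fun x => f x ^ e) volume a b := by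
  refine (((intervalIntegrable_abs_rpow he a b).const_mul (c ^ e)).add
    (intervalIntegrable_const (c := K ^ e))).mono_fun'
    (hf.pow_const e).aestronglyMeasurable ?_
  filter_upwards [ae_restrict_mem measurableSet_uIoc, ae_restrict_of_ae (volume.ae_ne 0)]
    with x hx hx0
  have hcx : 0 < c * |x| := mul_pos hc (abs_pos.2 hx0)
  rw [Real.norm_of_nonneg (Real.rpow_nonneg (hcx.le.trans (h_lower x hx)) e),
    ← Real.mul_rpow hc.le (abs_nonneg x)]
  exact Real.rpow_le_rpow_add_rpow_of_le_of_le hcx (h_lower x hx) (h_upper x hx)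

theorem abs_le_pi_of_mem_uIoc {ν : ℝ} (hν : ν ∈ Ι (-Real.pi) Real.pi) : |ν| ≤ Real.pi := by
  rw [uIoc_of_le (by linarith [Real.pi_pos])] at hν
  exact abs_le.2 ⟨hν.1.le, hν.2⟩

theorem intervalIntegrable_norm_one_sub_exp_neg_mul_I_rpow {e : ℝ} (he : -1 < e) :
    IntervalIntegrable (fun ν : ℝ => ‖1 - Complex.exp (-(ν * Complex.I))‖ ^ e)
      volume (-Real.pi) Real.pi :=
  intervalIntegrable_rpow_of_mul_abs_le (by fun_prop) (by positivity)
    (fun _ hν => mul_abs_le_norm_one_sub_exp_neg_mul_I (abs_le_pi_of_mem_uIoc hν))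
    (fun ν _ => norm_one_sub_exp_neg_mul_I_le_two ν) he

theorem ae_restrict_norm_one_sub_exp_neg_mul_I_pos :
    ∀ᵐ ν : ℝ ∂volume.restrict (Ι (-Real.pi) Real.pi),
      0 < ‖1 - Complex.exp (-(ν * Complex.I))‖ := by
  filter_upwards [ae_restrict_mem measurableSet_uIoc, ae_restrict_of_ae (volume.ae_ne 0)]
    with ν hν hν0
  have : 0 < 2 / Real.pi * |ν| := by have := Real.pi_pos; positivity
  exact this.trans_le (mul_abs_le_norm_one_sub_exp_neg_mul_I (abs_le_pi_of_mem_uIoc hν))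

section RpowSmul

variable {E : Type*} [NormedAddCommGroup E] [NormedSpace ℝ E] {φ : ℝ → E} {w : ℝ → ℝ}
  {a b M : ℝ}

theorem intervalIntegrable_rpow_smul {t : ℝ}
    (hw : IntervalIntegrable (fun x => w x ^ t) volume a b)
    (hφ : AEStronglyMeasurable φ (volume.restrict (Ι a b)))
    (hφM : ∀ᵐ x ∂volume.restrict (Ι a b), ‖φ x‖ ≤ M) :
    IntervalIntegrable (fun x => w x ^ t • φ x) volume a b :=
  intervalIntegrable_iff.2 (hw.def'.integrable.smul_bdd M hφ hφM)

theorem continuousOn_intervalIntegral_rpow_smul {U : Set ℝ} (hU : IsOpen U)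
    (hφ : AEStronglyMeasurable φ (volume.restrict (Ι a b)))
    (hφM : ∀ᵐ x ∂volume.restrict (Ι a b), ‖φ x‖ ≤ M)
    (hw_pos : ∀ᵐ x ∂volume.restrict (Ι a b), 0 < w x)
    (hw : ∀ t ∈ U, IntervalIntegrable (fun x => w x ^ t) volume a b) :
    ContinuousOn (fun t => ∫ x in a..b, w x ^ t • φ x) U := by
  intro t₀ ht₀
  obtain ⟨ε, hε, hεU⟩ := Metric.nhds_basis_closedBall.mem_iff.1 (hU.mem_nhds ht₀)
  rw [Real.closedBall_eq_Icc] at hεU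
  have h_near : ∀ᶠ t in 𝓝 t₀, t ∈ Icc (t₀ - ε) (t₀ + ε) :=
    Icc_mem_nhds (by linarith) (by linarith)
  have h_ends : ∀ t ∈ ({t₀ - ε, t₀ + ε} : Set ℝ), t ∈ U := by
    rintro t (rfl | rfl) <;> exact hεU ⟨by linarith, by linarith⟩
  refine (continuousAt_of_dominated_interval
    (bound := fun x => M * (w x ^ (t₀ - ε) + w x ^ (t₀ + ε))) ?_ ?_ ?_ ?_).continuousWithinAt
  · filter_upwards [h_near] with t ht
    exact (hw t (hεU ht)).aestronglyMeasurable_restrict_uIoc.smul hφ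
  · filter_upwards [h_near] with t ht
    rw [← ae_restrict_iff' measurableSet_uIoc]
    filter_upwards [hφM, hw_pos] with x hxM hx
    rw [norm_smul, Real.norm_of_nonneg (Real.rpow_nonneg hx.le t), mul_comm]
    exact mul_le_mul hxM (Real.rpow_le_rpow_add_rpow_of_mem_Icc hx ht)
      (Real.rpow_nonneg hx.le t) ((norm_nonneg _).trans hxM)
  · exact ((hw _ (h_ends _ (by simp))).add (hw _ (h_ends _ (by simp)))).const_mul M
  · rw [← ae_restrict_iff' measurableSet_uIoc]
    filter_upwards [hw_pos] with x hx
    exact (Real.continuousAt_const_rpow hx.ne').smul continuousAt_const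

end RpowSmul

/-- the lag-h autocovariance
F(d) = ∫_{-π}^{π} e^{ihν} g(ν) |1-e^{-iν}|^{-2d} dν
is well defined and continuous in the memory parameter d on (-∞, 1/2). -/
theorem stmt_6 (h : ℤ) (g : ℝ → ℝ)
    (hg : ContinuousOn g (Set.Icc (-Real.pi) Real.pi)) :
    (∀ d : ℝ, d < 1 / 2 →
      IntervalIntegrable
        (fun ν : ℝ => Complex.exp (↑h * ↑ν * Complex.I) *
          ((g ν * ‖1 - Complex.exp (-(↑ν * Complex.I))‖ ^ (-(2 * d)) : ℝ) : ℂ))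
        MeasureTheory.volume (-Real.pi) Real.pi) ∧
    ContinuousOn
      (fun d : ℝ => ∫ ν in (-Real.pi)..Real.pi,
        Complex.exp (↑h * ↑ν * Complex.I) *
          ((g ν * ‖1 - Complex.exp (-(↑ν * Complex.I))‖ ^ (-(2 * d)) : ℝ) : ℂ))
      (Set.Iio (1 / 2 : ℝ)) := by
  set φ : ℝ → ℂ := fun ν => Complex.exp (h * ν * Complex.I) * g ν
  have h_smul : ∀ d ν : ℝ, Complex.exp (h * ν * Complex.I) *
      ((g ν * ‖1 - Complex.exp (-(ν * Complex.I))‖ ^ (-(2 * d)) : ℝ) : ℂ)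
      = ‖1 - Complex.exp (-(ν * Complex.I))‖ ^ (-(2 * d)) • φ ν := by
    intro d ν
    rw [Complex.real_smul]
    push_cast
    ring
  simp only [h_smul]
  have h_sub : Ι (-Real.pi) Real.pi ⊆ Icc (-Real.pi) Real.pi := fun _ hν =>
    abs_le.1 (abs_le_pi_of_mem_uIoc hν)
  obtain ⟨M, hM⟩ := isCompact_Icc.exists_bound_of_continuousOn hg
  have hφM : ∀ᵐ ν ∂volume.restrict (Ι (-Real.pi) Real.pi), ‖φ ν‖ ≤ M := by
    filter_upwards [ae_restrict_mem measurableSet_uIoc] with ν hν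
    simpa [φ, Complex.norm_exp] using hM ν (h_sub hν)
  have hφ : AEStronglyMeasurable φ (volume.restrict (Ι (-Real.pi) Real.pi)) :=
    ((by fun_prop : Continuous fun ν : ℝ => Complex.exp (h * ν * Complex.I)).continuousOn.mul
      (Complex.continuous_ofReal.comp_continuousOn (hg.mono h_sub))).aestronglyMeasurable
      measurableSet_uIoc
  refine ⟨fun d hd => intervalIntegrable_rpow_smul
    (intervalIntegrable_norm_one_sub_exp_neg_mul_I_rpow (by linarith)) hφ hφM, ?_⟩
  exact (continuousOn_intervalIntegral_rpow_smul isOpen_Ioi hφ hφM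
    ae_restrict_norm_one_sub_exp_neg_mul_I_pos
    (fun _ ht => intervalIntegrable_norm_one_sub_exp_neg_mul_I_rpow ht)).comp
    (by fun_prop) (fun d hd => by simp only [mem_Iio, mem_Ioi] at hd ⊢; linarith)
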